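/- Characterization of fixed points on the special orthogonal group: Let α ≥ 0 and G ∈ SO(d)^{⊗n}. Then G is a fixed point of ST_α (i.e. G ∈ ST_α(G)) if and only if for each i ∈ [n], tr(C̃_iᵀ G G_iᵀ) = ‖C̃_iᵀ G‖_* − 2·s_i·σ_min(C̃_iᵀ G), where σ_min(C̃_iᵀ G) is the smallest singular value of C̃_iᵀ G and s_i = 1 if det(C̃_iᵀ G) < 0 and s_i = 0 otherwise. -/

import Mathlib

open Matrix BigOperators

noncomputable section
namespace GroupSync

variable {n d : ℕ}

/-- Frobenius norm of a real matrix. -/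
def frob {m k : Type*} [Fintype m] [Fintype k] (X : Matrix m k ℝ) : ℝ :=
  Real.sqrt (∑ i, ∑ j, (X i j) ^ 2)

/-- Spectral (operator) norm of a real matrix: the operator norm of the induced
linear map between Euclidean spaces. -/
def spec {m k : Type*} [Fintype m] [Fintype k] [DecidableEq k] (X : Matrix m k ℝ) : ℝ :=
  ‖LinearMap.toContinuousLinearMap (Matrix.toEuclideanLin X)‖

/-- The positive semidefinite square root of a positive semidefinite matrix (the former
`Matrix.PosSemidef.sqrt`, removed from Mathlib; same definition). -/
def psdSqrt {m : Type*} [Fintype m] [DecidableEq m] {A : Matrix m m ℝ} (hA : A.PosSemidef) :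
    Matrix m m ℝ :=
  hA.1.eigenvectorUnitary.1 * diagonal ((↑) ∘ (√·) ∘ hA.1.eigenvalues) *
    (star hA.1.eigenvectorUnitary : Matrix m m ℝ)

/-- Nuclear norm: trace of the positive semidefinite square root of `X * Xᵀ`
(i.e. the sum of the singular values of `X`). -/
def nuclear {m k : Type*} [Fintype m] [Fintype k] [DecidableEq m] (X : Matrix m k ℝ) : ℝ :=
  (psdSqrt (Matrix.posSemidef_self_mul_conjTranspose X)).trace

/-- The positive semidefinite square root of `X * Xᵀ`. -/
def psdSqrtMulT {m k : Type*} [Fintype m] [Fintype k] [DecidableEq m] (X : Matrix m k ℝ) :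
    Matrix m m ℝ :=
  psdSqrt (Matrix.posSemidef_self_mul_conjTranspose X)

/-- Membership in the orthogonal group `O(d)`. -/
def IsOd (g : Matrix (Fin d) (Fin d) ℝ) : Prop :=
  gᵀ * g = 1 ∧ g * gᵀ = 1

/-- Membership in the special orthogonal group `SO(d)`. -/
def IsSOd (g : Matrix (Fin d) (Fin d) ℝ) : Prop :=
  IsOd g ∧ g.det = 1

/-- The `i`-th `d × d` block of an `nd × d` matrix. -/
def blk (X : Matrix (Fin n × Fin d) (Fin d) ℝ) (i : Fin n) : Matrix (Fin d) (Fin d) ℝ :=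
  Matrix.of fun a b => X (i, a) b

/-- Membership in `O(d)^{⊗n}`: every `d × d` block is orthogonal. -/
def OdN (G : Matrix (Fin n × Fin d) (Fin d) ℝ) : Prop :=
  ∀ i : Fin n, IsOd (blk G i)

/-- Membership in `SO(d)^{⊗n}`. -/
def SOdN (G : Matrix (Fin n × Fin d) (Fin d) ℝ) : Prop :=
  ∀ i : Fin n, IsSOd (blk G i)

/-- The `i`-th block column (an `nd × d` matrix) of an `nd × nd` matrix. -/
def bcol (M : Matrix (Fin n × Fin d) (Fin n × Fin d) ℝ) (i : Fin n) :
    Matrix (Fin n × Fin d) (Fin d) ℝ :=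
  Matrix.of fun p b => M p (i, b)

/-- The `ij`-th `d × d` block of an `nd × nd` matrix. -/
def dblk (M : Matrix (Fin n × Fin d) (Fin n × Fin d) ℝ) (i j : Fin n) :
    Matrix (Fin d) (Fin d) ℝ :=
  Matrix.of fun a b => M (i, a) (j, b)

/-- `G' ∈ T_α(G)` (where `Ct = C + α I`): `G' ∈ O(d)^{⊗n}` and each block `G'_i` is a
nearest point of `C̃ᵢᵀ G` in `O(d)` w.r.t. the Frobenius norm. -/
def InT (Ct : Matrix (Fin n × Fin d) (Fin n × Fin d) ℝ)
    (G G' : Matrix (Fin n × Fin d) (Fin d) ℝ) : Prop :=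
  OdN G' ∧ ∀ i : Fin n, ∀ X : Matrix (Fin d) (Fin d) ℝ, IsOd X →
    frob (blk G' i - (bcol Ct i)ᵀ * G) ≤ frob (X - (bcol Ct i)ᵀ * G)

/-- `G' ∈ ST_α(G)`: the `SO(d)` analogue of `InT`. -/
def InST (Ct : Matrix (Fin n × Fin d) (Fin n × Fin d) ℝ)
    (G G' : Matrix (Fin n × Fin d) (Fin d) ℝ) : Prop :=
  SOdN G' ∧ ∀ i : Fin n, ∀ X : Matrix (Fin d) (Fin d) ℝ, IsSOd X →
    frob (blk G' i - (bcol Ct i)ᵀ * G) ≤ frob (X - (bcol Ct i)ᵀ * G)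

/-- The quotient distance `d(X, Y) = min_{g ∈ O(d)} ‖X − Y g‖_F`. -/
def dOrth (X Y : Matrix (Fin n × Fin d) (Fin d) ℝ) : ℝ :=
  ⨅ g : {g : Matrix (Fin d) (Fin d) ℝ // IsOd g}, frob (X - Y * g.1)

/-- The objective function `f(G) = tr(Gᵀ C G)`. -/
def obj (C : Matrix (Fin n × Fin d) (Fin n × Fin d) ℝ)
    (G : Matrix (Fin n × Fin d) (Fin d) ℝ) : ℝ :=
  Matrix.trace (Gᵀ * C * G)

/-- Hadamard (entrywise) product. -/
def had {m k : Type*} (X Y : Matrix m k ℝ) : Matrix m k ℝ :=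
  Matrix.of fun p q => X p q * Y p q

/-- `W ⊗ (1_d 1_dᵀ)`, the Kronecker product of `W` with the all-ones `d × d` matrix. -/
def kron1 (W : Matrix (Fin n) (Fin n) ℝ) : Matrix (Fin n × Fin d) (Fin n × Fin d) ℝ :=
  Matrix.kroneckerMap (· * ·) W (Matrix.of fun (_ _ : Fin d) => (1 : ℝ))

/-- The all-ones matrix `1_m 1_mᵀ`. -/
def onesMat (m : Type*) : Matrix m m ℝ :=
  Matrix.of fun _ _ => (1 : ℝ)

/-- `symblockdiag`: symmetrize the diagonal `d × d` blocks, zero out all other blocks. -/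
def sbd (X : Matrix (Fin n × Fin d) (Fin n × Fin d) ℝ) :
    Matrix (Fin n × Fin d) (Fin n × Fin d) ℝ :=
  Matrix.of fun p q => if p.1 = q.1 then (X p q + X (p.1, q.2) (q.1, p.2)) / 2 else 0

/-- `S(G) = symblockdiag(C G Gᵀ) − C`. -/
def Smat (C : Matrix (Fin n × Fin d) (Fin n × Fin d) ℝ)
    (G : Matrix (Fin n × Fin d) (Fin d) ℝ) : Matrix (Fin n × Fin d) (Fin n × Fin d) ℝ :=
  sbd (C * (G * Gᵀ)) - C

/-- `G` is a second-order critical point of (QP): `S(G) G = 0` and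
`⟨H, S(G) H⟩ ≥ 0` for all tangent directions `H` (blockwise `Hᵢ Gᵢᵀ` skew-symmetric). -/
def IsSOC (C : Matrix (Fin n × Fin d) (Fin n × Fin d) ℝ)
    (G : Matrix (Fin n × Fin d) (Fin d) ℝ) : Prop :=
  Smat C G * G = 0 ∧
  ∀ H : Matrix (Fin n × Fin d) (Fin d) ℝ,
    (∀ i : Fin n, (blk H i * (blk G i)ᵀ)ᵀ = -(blk H i * (blk G i)ᵀ)) →
    0 ≤ Matrix.trace (Hᵀ * (Smat C G * H))

/-- Smallest singular value of a square matrix, as the minimum of `‖M v‖` over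
unit vectors `v`. -/
def sigmaMin (M : Matrix (Fin d) (Fin d) ℝ) : ℝ :=
  ⨅ v : {v : Fin d → ℝ // ∑ a, (v a) ^ 2 = 1}, Real.sqrt (∑ a, (M.mulVec v.1 a) ^ 2)

/-- The singular values of a square matrix: square roots of the eigenvalues of `Mᵀ M`. -/
def singVal (M : Matrix (Fin d) (Fin d) ℝ) (l : Fin d) : ℝ :=
  Real.sqrt ((show (Mᵀ * M).IsHermitian by
    rw [← Matrix.conjTranspose_eq_transpose_of_trivial]; exact Matrix.isHermitian_conjTranspose_mul_self M).eigenvalues l)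

/-- Smallest eigenvalue of a (symmetric) matrix, as the minimum Rayleigh quotient
over unit vectors. -/
def lambdaMin {m : Type*} [Fintype m] (M : Matrix m m ℝ) : ℝ :=
  ⨅ v : {v : m → ℝ // ∑ i, (v i) ^ 2 = 1}, v.1 ⬝ᵥ M.mulVec v.1

/-- `D_α(G)`: block diagonal of the psd square roots of `(C̃ᵢᵀ G)(C̃ᵢᵀ G)ᵀ`, minus `C̃`. -/
def Dmat (Ct : Matrix (Fin n × Fin d) (Fin n × Fin d) ℝ)
    (G : Matrix (Fin n × Fin d) (Fin d) ℝ) : Matrix (Fin n × Fin d) (Fin n × Fin d) ℝ :=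
  (Matrix.of fun p q =>
    if p.1 = q.1 then psdSqrtMulT ((bcol Ct p.1)ᵀ * G) p.2 q.2 else 0) - Ct

/-- The residual function `ρ_α(G) = ‖D_α(G) G‖_F`. -/
def rho (Ct : Matrix (Fin n × Fin d) (Fin n × Fin d) ℝ)
    (G : Matrix (Fin n × Fin d) (Fin d) ℝ) : ℝ :=
  frob (Dmat Ct G * G)

/-- Blockwise infinity norm: `‖X‖_∞ = max_i ‖X_i‖` (spectral norm of the blocks). -/
def binf (X : Matrix (Fin n × Fin d) (Fin d) ℝ) : ℝ :=
  ⨆ i : Fin n, spec (blk X i)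

/-!
Expanding the Frobenius norm, `X ∈ SO(d)` is a nearest point of `A` exactly when it maximises
`tr (A Xᵀ)`. For a singular value decomposition `A = P D Q`, `tr (A Xᵀ) = ∑ eᵢ Rᵢᵢ` with
`R = Pᵀ X Qᵀ` orthogonal of determinant `det P det Q`. Diagonal entries of an orthogonal matrix
are at most `1`, and if `det R = -1` then `-1` is an eigenvalue of `R`, so `tr R ≤ d - 2`, which
costs at least twice the smallest singular value. The bound `‖A‖_*` or `‖A‖_* - 2 σ_min(A)` is
attained by `R = 1` or by a coordinate reflection; when `det A ≥ 0` but `det P det Q = -1`, some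
singular value vanishes and the two bounds agree.
-/

lemma psdSqrt_posSemidef {m : Type*} [Fintype m] [DecidableEq m] {A : Matrix m m ℝ}
    (hA : A.PosSemidef) : (psdSqrt hA).PosSemidef := by
  unfold psdSqrt
  rw [show (star hA.1.eigenvectorUnitary : Matrix m m ℝ) = (hA.1.eigenvectorUnitary.1)ᴴ from rfl]
  refine Matrix.PosSemidef.mul_mul_conjTranspose_same (posSemidef_diagonal_iff.mpr fun i => ?_) _
  simp [Real.sqrt_nonneg]

lemma psdSqrt_mul_self {m : Type*} [Fintype m] [DecidableEq m] {A : Matrix m m ℝ}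
    (hA : A.PosSemidef) : psdSqrt hA * psdSqrt hA = A := by
  unfold psdSqrt
  have hU : (star hA.1.eigenvectorUnitary : Matrix m m ℝ) * hA.1.eigenvectorUnitary.1 = 1 :=
    Unitary.coe_star_mul_self _
  have hD : diagonal (((↑) : ℝ → ℝ) ∘ (√·) ∘ hA.1.eigenvalues) *
      diagonal (((↑) : ℝ → ℝ) ∘ (√·) ∘ hA.1.eigenvalues) =
      diagonal (RCLike.ofReal ∘ hA.1.eigenvalues) := by
    rw [diagonal_mul_diagonal]
    congr 1
    funext i
    simp [Real.mul_self_sqrt (hA.eigenvalues_nonneg i)]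
  conv_rhs => rw [hA.1.spectral_theorem]
  rw [Unitary.conjStarAlgAut_apply, ← hD]
  simp only [Matrix.mul_assoc]
  rw [← Matrix.mul_assoc (star hA.1.eigenvectorUnitary : Matrix m m ℝ), hU, Matrix.one_mul]

lemma nonempty_of_det_ne_one {M : Matrix (Fin d) (Fin d) ℝ} (h : M.det ≠ 1) : Nonempty (Fin d) := by
  by_contra hd
  have : IsEmpty (Fin d) := not_nonempty_iff.mp hd
  exact h det_isEmpty

lemma exists_isOd_rows_eq (s : Set (Fin d)) (v : Fin d → Fin d → ℝ)
    (hv : ∀ i ∈ s, ∀ j ∈ s, v i ⬝ᵥ v j = if i = j then 1 else 0) :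
    ∃ W : Matrix (Fin d) (Fin d) ℝ, IsOd W ∧ ∀ i ∈ s, W i = v i := by
  let v' : Fin d → EuclideanSpace ℝ (Fin d) := fun i => WithLp.toLp 2 (v i)
  have hv' : Orthonormal ℝ (s.domRestrict v') := by
    rw [orthonormal_iff_ite]
    rintro ⟨i, hi⟩ ⟨j, hj⟩
    simp [v', Set.domRestrict_apply, EuclideanSpace.inner_eq_star_dotProduct, dotProduct_comm (v j),
      hv i hi j hj, Subtype.ext_iff]
  obtain ⟨b, hb⟩ := hv'.exists_orthonormalBasis_extension_of_card_eq (by simp)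
  have hrows : ∀ i j, (fun k => b i k) ⬝ᵥ (fun k => b j k) = if i = j then (1 : ℝ) else 0 := by
    intro i j
    simpa [EuclideanSpace.inner_eq_star_dotProduct, dotProduct_comm] using
      orthonormal_iff_ite.mp b.orthonormal i j
  refine ⟨Matrix.of fun i j => b i j, ⟨?_, ?_⟩, fun i hi => ?_⟩
  · rw [mul_eq_one_comm]
    ext i j
    simpa [Matrix.mul_apply, Matrix.one_apply, dotProduct] using hrows i j
  · ext i j
    simpa [Matrix.mul_apply, Matrix.one_apply, dotProduct] using hrows i j
  · funext j
    simp [hb i hi, v']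

namespace IsOd

variable {P Q : Matrix (Fin d) (Fin d) ℝ}

lemma transpose (h : IsOd P) : IsOd Pᵀ := by
  simpa only [IsOd, transpose_transpose] using h.symm

lemma mul (hP : IsOd P) (hQ : IsOd Q) : IsOd (P * Q) := by
  constructor
  · rw [transpose_mul, Matrix.mul_assoc, ← Matrix.mul_assoc Pᵀ, hP.1, Matrix.one_mul, hQ.1]
  · rw [transpose_mul, Matrix.mul_assoc, ← Matrix.mul_assoc Q, hQ.2, Matrix.one_mul, hP.2]

lemma det_mul_self (h : IsOd P) : P.det * P.det = 1 := by
  simpa only [det_mul, det_transpose, det_one] using congrArg det h.1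

lemma det_mul_det_eq_one_or (hP : IsOd P) (hQ : IsOd Q) :
    P.det * Q.det = 1 ∨ P.det * Q.det = -1 :=
  mul_self_eq_one_iff.mp <| by
    linear_combination (Q.det * Q.det) * hP.det_mul_self + hQ.det_mul_self

lemma sum_sq_mulVec (h : IsOd P) (x : Fin d → ℝ) : ∑ a, (P *ᵥ x) a ^ 2 = ∑ a, x a ^ 2 := by
  simpa only [dotProduct, sq, Matrix.dotProduct_mulVec, vecMul_mulVec, h.1, vecMul_one]
    using Matrix.dotProduct_mulVec (P *ᵥ x) P x

lemma apply_le_one (h : IsOd P) (i j : Fin d) : P i j ≤ 1 := by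
  have hcol : ∑ a, P a j ^ 2 = 1 := by
    simpa [Matrix.mul_apply, sq] using congrFun (congrFun h.1 j) j
  have : P i j ^ 2 ≤ 1 :=
    hcol ▸ Finset.single_le_sum (fun a _ => sq_nonneg (P a j)) (Finset.mem_univ i)
  nlinarith

/-- Since `P + 1 = P (P + 1)ᵀ`, `det P = -1` forces `det (P + 1) = 0`. -/
lemma exists_mulVec_eq_neg_self (h : IsOd P) (hdet : P.det = -1) :
    ∃ u : Fin d → ℝ, u ⬝ᵥ u = 1 ∧ P *ᵥ u = -u := by
  have hsing : (P + 1).det = 0 := by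
    have hfac : P + 1 = P * (P + 1)ᵀ := by
      rw [transpose_add, transpose_one, Matrix.mul_add, h.2, Matrix.mul_one, add_comm]
    have : (P + 1).det = P.det * (P + 1).det := by
      conv_lhs => rw [hfac]
      rw [det_mul, det_transpose]
    rw [hdet] at this
    linarith
  obtain ⟨v, hv0, hv⟩ := exists_mulVec_eq_zero_iff.mpr hsing
  have hvv : 0 < v ⬝ᵥ v :=
    lt_of_le_of_ne (Finset.sum_nonneg fun i _ => mul_self_nonneg (v i))
      (Ne.symm (dotProduct_self_eq_zero.not.mpr hv0))
  refine ⟨(√(v ⬝ᵥ v))⁻¹ • v, ?_, ?_⟩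
  · rw [smul_dotProduct, dotProduct_smul, smul_eq_mul, smul_eq_mul, ← mul_assoc, ← mul_inv,
      Real.mul_self_sqrt hvv.le, inv_mul_cancel₀ hvv.ne']
  · rw [add_mulVec, one_mulVec, add_eq_zero_iff_eq_neg] at hv
    rw [mulVec_smul, hv, smul_neg]

lemma trace_le_sub_two_of_det_eq_neg_one (h : IsOd P) (hdet : P.det = -1) :
    P.trace ≤ d - 2 := by
  obtain ⟨i₀⟩ := nonempty_of_det_ne_one (M := P) (by norm_num [hdet])
  obtain ⟨u, huu, hPu⟩ := h.exists_mulVec_eq_neg_self hdet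
  obtain ⟨W, hW, hWu⟩ := exists_isOd_rows_eq {i₀} (fun _ => u) (by simp [huu])
  set M := W * P * Wᵀ with hMdef
  have hM : IsOd M := (hW.mul h).mul hW.transpose
  have htr : M.trace = P.trace := by rw [trace_mul_cycle, hW.1, Matrix.one_mul]
  have hM₀ : M i₀ i₀ = -1 := by
    rw [hMdef, mul_mul_apply, transpose_transpose, hWu i₀ rfl, hPu, dotProduct_neg, huu]
  have hrest : ∑ i ∈ Finset.univ.erase i₀, M i i ≤ d - 1 := by
    calc ∑ i ∈ Finset.univ.erase i₀, M i i ≤ ∑ i ∈ Finset.univ.erase i₀, (1 : ℝ) :=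
          Finset.sum_le_sum fun i _ => hM.apply_le_one i i
      _ = d - 1 := by
          rw [Finset.sum_const, Finset.card_erase_of_mem (Finset.mem_univ _), Finset.card_univ,
            Fintype.card_fin, nsmul_one, Nat.cast_sub i₀.pos, Nat.cast_one]
  rw [← htr, trace, ← Finset.add_sum_erase _ _ (Finset.mem_univ i₀)]
  simp only [diag_apply]
  linarith

end IsOd

lemma exists_isOd_spectral {M : Matrix (Fin d) (Fin d) ℝ} (hM : M.IsHermitian) :
    ∃ P : Matrix (Fin d) (Fin d) ℝ, IsOd P ∧ M = P * diagonal hM.eigenvalues * Pᵀ := by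
  refine ⟨hM.eigenvectorUnitary, ⟨?_, ?_⟩, ?_⟩
  · simpa [star_eq_conjTranspose] using
      (mem_unitaryGroup_iff').mp hM.eigenvectorUnitary.2
  · simpa [star_eq_conjTranspose] using
      (mem_unitaryGroup_iff).mp hM.eigenvectorUnitary.2
  · simpa [star_eq_conjTranspose] using hM.spectral_theorem

lemma exists_isOd_eq_diagonal_mul {B : Matrix (Fin d) (Fin d) ℝ} {e : Fin d → ℝ}
    (hB : B * Bᵀ = diagonal fun i => e i ^ 2) :
    ∃ W : Matrix (Fin d) (Fin d) ℝ, IsOd W ∧ B = diagonal e * W := by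
  have hrow : ∀ i j, B i ⬝ᵥ B j = if i = j then e i ^ 2 else 0 := by
    intro i j
    simpa [Matrix.mul_apply, dotProduct, diagonal_apply] using congrFun (congrFun hB i) j
  obtain ⟨W, hW, hWB⟩ := exists_isOd_rows_eq {i | e i ≠ 0} (fun i => (e i)⁻¹ • B i) (by
    intro i hi j _
    simp only [smul_dotProduct, dotProduct_smul, hrow, smul_eq_mul]
    split_ifs with hij
    · subst hij
      field_simp [show e i ≠ 0 from hi]
    · simp)
  refine ⟨W, hW, ?_⟩
  ext i k
  rw [diagonal_mul]
  by_cases hei : e i = 0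
  · have hBi : B i = 0 := dotProduct_self_eq_zero.mp (by simp [hrow, hei])
    simp [hei, hBi]
  · rw [hWB i hei]
    simp [hei]

structure IsSVD (A P Q : Matrix (Fin d) (Fin d) ℝ) (e : Fin d → ℝ) : Prop where
  isOd_left : IsOd P
  isOd_right : IsOd Q
  nonneg : ∀ i, 0 ≤ e i
  eq_mul : A = P * diagonal e * Q

lemma exists_isSVD (A : Matrix (Fin d) (Fin d) ℝ) :
    ∃ (P Q : Matrix (Fin d) (Fin d) ℝ) (e : Fin d → ℝ), IsSVD A P Q e ∧ nuclear A = ∑ i, e i := by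
  have hAA := posSemidef_self_mul_conjTranspose A
  have hS := psdSqrt_posSemidef hAA
  obtain ⟨P, hP, hSP⟩ := exists_isOd_spectral hS.1
  set e := hS.1.eigenvalues
  have hBB : Pᵀ * A * (Pᵀ * A)ᵀ = diagonal fun i => e i ^ 2 := by
    calc Pᵀ * A * (Pᵀ * A)ᵀ = Pᵀ * (psdSqrt hAA * psdSqrt hAA) * P := by
          rw [psdSqrt_mul_self, conjTranspose_eq_transpose_of_trivial, transpose_mul,
            transpose_transpose]
          simp only [Matrix.mul_assoc]
      _ = Pᵀ * P * diagonal e * (Pᵀ * P) * diagonal e * (Pᵀ * P) := by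
          rw [hSP]
          simp only [Matrix.mul_assoc]
      _ = _ := by simp [hP.1, diagonal_mul_diagonal, sq]
  obtain ⟨W, hW, hBW⟩ := exists_isOd_eq_diagonal_mul hBB
  refine ⟨P, W, e, ⟨hP, hW, hS.eigenvalues_nonneg, ?_⟩, ?_⟩
  · rw [Matrix.mul_assoc, ← hBW, ← Matrix.mul_assoc, hP.2, Matrix.one_mul]
  · rw [nuclear, hSP, trace_mul_cycle, hP.1, Matrix.one_mul, trace_diagonal]

namespace IsSVD

variable {A P Q : Matrix (Fin d) (Fin d) ℝ} {e : Fin d → ℝ}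

lemma det_eq (h : IsSVD A P Q e) : A.det = P.det * Q.det * ∏ i, e i := by
  rw [h.eq_mul, det_mul, det_mul, det_diagonal]
  ring

lemma det_mul_det_eq_neg_one_of_det_neg (h : IsSVD A P Q e) (hA : A.det < 0) :
    P.det * Q.det = -1 := by
  refine (h.isOd_left.det_mul_det_eq_one_or h.isOd_right).resolve_left fun hPQ => ?_
  rw [h.det_eq, hPQ, one_mul] at hA
  exact hA.not_ge (Finset.prod_nonneg fun i _ => h.nonneg i)

lemma trace_mul_transpose (h : IsSVD A P Q e) (X : Matrix (Fin d) (Fin d) ℝ) :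
    (A * Xᵀ).trace = ∑ i, e i * (Pᵀ * X * Qᵀ) i i := by
  have : (A * Xᵀ).trace = (diagonal e * (Pᵀ * X * Qᵀ)ᵀ).trace := by
    rw [h.eq_mul, transpose_mul, transpose_mul, transpose_transpose, transpose_transpose,
      Matrix.mul_assoc, Matrix.mul_assoc, trace_mul_comm]
    simp only [Matrix.mul_assoc]
  rw [this]
  simp only [trace, diag_apply, diagonal_mul, transpose_apply]

lemma sum_sq_mulVec (h : IsSVD A P Q e) (x : Fin d → ℝ) :
    ∑ a, (A *ᵥ x) a ^ 2 = ∑ i, e i ^ 2 * (Q *ᵥ x) i ^ 2 := by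
  rw [h.eq_mul, ← mulVec_mulVec, ← mulVec_mulVec, h.isOd_left.sum_sq_mulVec]
  simp [mulVec_diagonal, mul_pow]

lemma sigmaMin_eq (h : IsSVD A P Q e) {i₀ : Fin d} (hmin : ∀ i, e i₀ ≤ e i) :
    sigmaMin A = e i₀ := by
  let v₀ : {v : Fin d → ℝ // ∑ a, v a ^ 2 = 1} :=
    ⟨Qᵀ *ᵥ Pi.single i₀ 1, by
      rw [h.isOd_right.transpose.sum_sq_mulVec]
      simp [Pi.single_apply]⟩
  apply le_antisymm
  · calc sigmaMin A ≤ √(∑ a, (A *ᵥ v₀.1) a ^ 2) :=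
          ciInf_le ⟨0, by rintro _ ⟨w, rfl⟩; positivity⟩ v₀
      _ = e i₀ := by
          rw [h.sum_sq_mulVec, mulVec_mulVec, h.isOd_right.2, one_mulVec]
          simp [Pi.single_apply, Real.sqrt_sq (h.nonneg i₀)]
  · have : Nonempty {v : Fin d → ℝ // ∑ a, v a ^ 2 = 1} := ⟨v₀⟩
    refine le_ciInf fun ⟨x, hx⟩ => ?_
    have hQx : ∑ i, (Q *ᵥ x) i ^ 2 = 1 := by rw [h.isOd_right.sum_sq_mulVec, hx]
    rw [← Real.sqrt_sq (h.nonneg i₀), h.sum_sq_mulVec]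
    refine Real.sqrt_le_sqrt ?_
    calc e i₀ ^ 2 = ∑ i, e i₀ ^ 2 * (Q *ᵥ x) i ^ 2 := by rw [← Finset.mul_sum, hQx, mul_one]
      _ ≤ ∑ i, e i ^ 2 * (Q *ᵥ x) i ^ 2 := Finset.sum_le_sum fun i _ =>
          mul_le_mul_of_nonneg_right (pow_le_pow_left₀ (h.nonneg i₀) (hmin i) 2) (sq_nonneg _)

end IsSVD

section WeightedTrace

variable {e : Fin d → ℝ} {R : Matrix (Fin d) (Fin d) ℝ}

lemma sum_mul_diag_le (he : ∀ i, 0 ≤ e i) (hR : IsOd R) : ∑ i, e i * R i i ≤ ∑ i, e i :=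
  Finset.sum_le_sum fun i _ => mul_le_of_le_one_right (he i) (hR.apply_le_one i i)

/-- `∑ eᵢ (1 - Rᵢᵢ) ≥ e i₀ (d - tr R) ≥ 2 e i₀`. -/
lemma sum_mul_diag_le_of_det_eq_neg_one (he : ∀ i, 0 ≤ e i) {i₀ : Fin d}
    (hmin : ∀ i, e i₀ ≤ e i) (hR : IsOd R) (hdet : R.det = -1) :
    ∑ i, e i * R i i ≤ ∑ i, e i - 2 * e i₀ := by
  have htr := hR.trace_le_sub_two_of_det_eq_neg_one hdet
  have hweights : ∑ i, e i₀ * (1 - R i i) ≤ ∑ i, e i * (1 - R i i) :=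
    Finset.sum_le_sum fun i _ =>
      mul_le_mul_of_nonneg_right (hmin i) (sub_nonneg.mpr (hR.apply_le_one i i))
  have hsum : ∑ i, e i₀ * (1 - R i i) = e i₀ * (d - R.trace) := by
    simp [← Finset.mul_sum, Finset.sum_sub_distrib, trace]
  simp only [mul_sub, mul_one, Finset.sum_sub_distrib] at hweights hsum
  nlinarith [he i₀]

end WeightedTrace

def reflectionAt (i₀ : Fin d) : Matrix (Fin d) (Fin d) ℝ :=
  diagonal fun i => if i = i₀ then -1 else 1

lemma isOd_reflectionAt (i₀ : Fin d) : IsOd (reflectionAt i₀) := by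
  have hsq : reflectionAt i₀ * reflectionAt i₀ = 1 := by
    rw [reflectionAt, diagonal_mul_diagonal, ← diagonal_one]
    congr 1
    funext i
    split_ifs <;> norm_num
  rw [IsOd, reflectionAt, diagonal_transpose, ← reflectionAt]
  exact ⟨hsq, hsq⟩

lemma det_reflectionAt (i₀ : Fin d) : (reflectionAt i₀).det = -1 := by
  simp [reflectionAt, det_diagonal, Finset.prod_ite_eq']

lemma sum_mul_diag_reflectionAt (e : Fin d → ℝ) (i₀ : Fin d) :
    ∑ i, e i * reflectionAt i₀ i i = ∑ i, e i - 2 * e i₀ := by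
  have hterm : ∀ i, e i * reflectionAt i₀ i i = e i - if i = i₀ then 2 * e i₀ else 0 := by
    intro i
    by_cases hi : i = i₀ <;> simp [reflectionAt, hi]
    ring
  simp [hterm, Finset.sum_sub_distrib]

def soProcrustesValue (A : Matrix (Fin d) (Fin d) ℝ) : ℝ :=
  nuclear A - if A.det < 0 then 2 * sigmaMin A else 0

lemma trace_mul_transpose_le_soProcrustesValue (A : Matrix (Fin d) (Fin d) ℝ)
    {X : Matrix (Fin d) (Fin d) ℝ} (hX : IsSOd X) :
    (A * Xᵀ).trace ≤ soProcrustesValue A := by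
  obtain ⟨P, Q, e, h, hnuc⟩ := exists_isSVD A
  have hR : IsOd (Pᵀ * X * Qᵀ) := (h.isOd_left.transpose.mul hX.1).mul h.isOd_right.transpose
  rw [soProcrustesValue, hnuc, h.trace_mul_transpose]
  split_ifs with hA
  · have : Nonempty (Fin d) := nonempty_of_det_ne_one (M := A) (by linarith)
    obtain ⟨i₀, hmin⟩ := Finite.exists_min e
    rw [h.sigmaMin_eq hmin]
    refine sum_mul_diag_le_of_det_eq_neg_one h.nonneg hmin hR ?_
    rw [det_mul, det_mul, det_transpose, det_transpose, hX.2]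
    linear_combination h.det_mul_det_eq_neg_one_of_det_neg hA
  · simpa using sum_mul_diag_le h.nonneg hR

/-- For an SVD `A = P D Q`, the maximiser is `P Q`, or `P F Q` with `F` the reflection in the
direction of a smallest singular value when `det P det Q = -1`. -/
lemma exists_trace_mul_transpose_eq_soProcrustesValue (A : Matrix (Fin d) (Fin d) ℝ) :
    ∃ X, IsSOd X ∧ (A * Xᵀ).trace = soProcrustesValue A := by
  obtain ⟨P, Q, e, h, hnuc⟩ := exists_isSVD A
  have hval : ∀ R, (A * (P * R * Q)ᵀ).trace = ∑ i, e i * R i i := fun R => by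
    rw [h.trace_mul_transpose, ← Matrix.mul_assoc, ← Matrix.mul_assoc, h.isOd_left.1,
      Matrix.one_mul, Matrix.mul_assoc, h.isOd_right.2, Matrix.mul_one]
  have hO : ∀ R, IsOd R → IsOd (P * R * Q) := fun R hR => (h.isOd_left.mul hR).mul h.isOd_right
  have hdet : ∀ R, (P * R * Q).det = P.det * Q.det * R.det := fun R => by
    rw [det_mul, det_mul]
    ring
  rcases h.isOd_left.det_mul_det_eq_one_or h.isOd_right with hPQ | hPQ
  · have hA : ¬ A.det < 0 := fun hA => by
      linarith [h.det_mul_det_eq_neg_one_of_det_neg hA]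
    refine ⟨P * 1 * Q, ⟨hO 1 ⟨by simp, by simp⟩, by rw [hdet, hPQ, det_one, mul_one]⟩, ?_⟩
    rw [hval, soProcrustesValue, if_neg hA, hnuc, sub_zero]
    simp
  · have : Nonempty (Fin d) :=
      nonempty_of_det_ne_one (M := P * Q) (by rw [det_mul, hPQ]; norm_num)
    obtain ⟨i₀, hmin⟩ := Finite.exists_min e
    refine ⟨P * reflectionAt i₀ * Q, ⟨hO _ (isOd_reflectionAt i₀), ?_⟩, ?_⟩
    · rw [hdet, hPQ, det_reflectionAt]
      norm_num
    rw [hval, sum_mul_diag_reflectionAt, soProcrustesValue, hnuc]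
    split_ifs with hA
    · rw [h.sigmaMin_eq hmin]
    · -- `det A = -∏ e ≥ 0` makes some singular value, hence the smallest one, vanish
      have hprod : ∏ i, e i = 0 := by
        rw [h.det_eq, hPQ] at hA
        linarith [Finset.prod_nonneg fun i (_ : i ∈ Finset.univ) => h.nonneg i]
      obtain ⟨j, -, hj⟩ := Finset.prod_eq_zero_iff.mp hprod
      rw [le_antisymm (hj ▸ hmin j) (h.nonneg i₀)]
      ring

lemma sum_sq_sub_eq_of_isOd {A X : Matrix (Fin d) (Fin d) ℝ} (hX : IsOd X) :
    ∑ i, ∑ j, (X - A) i j ^ 2 = d - 2 * (A * Xᵀ).trace + ∑ i, ∑ j, A i j ^ 2 := by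
  have hX2 : ∑ i, ∑ j, X i j ^ 2 = d := by
    simpa [Matrix.mul_apply, sq, trace] using congrArg trace hX.2
  have hAX : (A * Xᵀ).trace = ∑ i, ∑ j, A i j * X i j := by
    simp [trace, Matrix.mul_apply]
  rw [hAX, ← hX2, Finset.mul_sum, ← Finset.sum_sub_distrib, ← Finset.sum_add_distrib]
  refine Finset.sum_congr rfl fun i _ => ?_
  rw [Finset.mul_sum, ← Finset.sum_sub_distrib, ← Finset.sum_add_distrib]
  refine Finset.sum_congr rfl fun j _ => ?_
  rw [Matrix.sub_apply]
  ring

lemma frob_sub_le_frob_sub_iff {A X Y : Matrix (Fin d) (Fin d) ℝ} (hX : IsOd X) (hY : IsOd Y) :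
    frob (X - A) ≤ frob (Y - A) ↔ (A * Yᵀ).trace ≤ (A * Xᵀ).trace := by
  rw [frob, frob, Real.sqrt_le_sqrt_iff (by positivity), sum_sq_sub_eq_of_isOd hX,
    sum_sq_sub_eq_of_isOd hY]
  constructor <;> intro h <;> linarith

lemma isSOd_nearest_iff_trace_eq_soProcrustesValue {A Y : Matrix (Fin d) (Fin d) ℝ}
    (hY : IsSOd Y) :
    (∀ X, IsSOd X → frob (Y - A) ≤ frob (X - A)) ↔ (A * Yᵀ).trace = soProcrustesValue A := by
  constructor
  · intro hnear
    obtain ⟨X, hX, hXval⟩ := exists_trace_mul_transpose_eq_soProcrustesValue A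
    exact le_antisymm (trace_mul_transpose_le_soProcrustesValue A hY)
      (hXval ▸ (frob_sub_le_frob_sub_iff hY.1 hX.1).mp (hnear X hX))
  · intro hval X hX
    exact (frob_sub_le_frob_sub_iff hY.1 hX.1).mpr
      (hval ▸ trace_mul_transpose_le_soProcrustesValue A hX)

theorem special_orthogonal_fixed_point_characterization_general {n d : ℕ}
    (Ct : Matrix (Fin n × Fin d) (Fin n × Fin d) ℝ)
    (G : Matrix (Fin n × Fin d) (Fin d) ℝ) (hG : SOdN G) :
    InST Ct G G ↔
      ∀ i : Fin n,
        Matrix.trace ((bcol Ct i)ᵀ * G * (blk G i)ᵀ) =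
          nuclear ((bcol Ct i)ᵀ * G) -
            (if ((bcol Ct i)ᵀ * G).det < 0 then 2 * sigmaMin ((bcol Ct i)ᵀ * G) else 0) := by
  simp only [InST, hG, true_and]
  exact forall_congr' fun i => isSOd_nearest_iff_trace_eq_soProcrustesValue (hG i)

/-- characterization of fixed points of `ST_α` on `SO(d)^{⊗n}`.
For `α ≥ 0`, `C` symmetric and `G ∈ SO(d)^{⊗n}` with `C̃ = C + α I`:
`G ∈ ST_α(G)` iff for each `i`,
`tr(C̃ᵢᵀ G Gᵢᵀ) = ‖C̃ᵢᵀ G‖_* − 2·sᵢ·σ_min(C̃ᵢᵀ G)` where `sᵢ = 1` if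
`det(C̃ᵢᵀ G) < 0` and `sᵢ = 0` otherwise. -/
theorem special_orthogonal_fixed_point_characterization {n d : ℕ}
    (C : Matrix (Fin n × Fin d) (Fin n × Fin d) ℝ) (hCsymm : Cᵀ = C)
    (α : ℝ) (hα : 0 ≤ α)
    (Ct : Matrix (Fin n × Fin d) (Fin n × Fin d) ℝ)
    (hCt : Ct = C + α • (1 : Matrix (Fin n × Fin d) (Fin n × Fin d) ℝ))
    (G : Matrix (Fin n × Fin d) (Fin d) ℝ) (hG : SOdN G) :
    InST Ct G G ↔
      ∀ i : Fin n,
        Matrix.trace ((bcol Ct i)ᵀ * G * (blk G i)ᵀ) =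
          nuclear ((bcol Ct i)ᵀ * G) -
            (if ((bcol Ct i)ᵀ * G).det < 0 then 2 * sigmaMin ((bcol Ct i)ᵀ * G) else 0) :=
  special_orthogonal_fixed_point_characterization_general Ct G hG
end GroupSync
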